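/- Biased Fourier weight bound: let f: {±1}ᵐ → ℝ and ℓ ∈ [m]. Suppose there is w such that every restriction ρ ∈ {−1,1,⋆}ᵐ satisfies ∑_{|S|=ℓ}|f̂_ρ(S)| ≤ w (Fourier coefficients with respect to the uniform measure). Then for every bias vector μ ∈ [−1/2,1/2]ᵐ, the μ-biased level-ℓ Fourier weight satisfies ∑_{|S|=ℓ}|f̂^μ(S)| ≤ 4^ℓ·w. -/

import Mathlib

/-
Random restrictions: leave coordinate `i` free with probability `1/2` and fix it to `b = ±1` with
probability `(1 + 2bμᵢ)/4`, which is a probability distribution as soon as `|μᵢ| ≤ 1/2`. Filling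
the free coordinates with uniform bits produces exactly a `μ`-biased point, and a direct
coordinatewise computation gives `f̂^μ(S) = ∏_{i∈S} 2σᵢ · E_ρ[f̂_ρ(S)]`. As `σᵢ ≤ 1`, summing over
`|S| = ℓ` bounds the biased level-`ℓ` weight by `2^ℓ · E_ρ[∑_{|S|=ℓ} |f̂_ρ(S)|] ≤ 2^ℓ w ≤ 4^ℓ w`.
-/

def toPM (b : Bool) : ℝ := if b then 1 else -1

def applyR {m : ℕ} (r : Fin m → Option Bool) (x : Fin m → ℝ) : Fin m → ℝ :=
  fun i => match r i with
    | none => x i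
    | some b => toPM b

noncomputable def hatU {m : ℕ} (g : (Fin m → ℝ) → ℝ) (S : Finset (Fin m)) : ℝ :=
  ((2:ℝ) ^ m)⁻¹ * ∑ x : Fin m → Bool, g (fun i => toPM (x i)) * ∏ i ∈ S, toPM (x i)

noncomputable def hatMu {m : ℕ} (μ : Fin m → ℝ) (f : (Fin m → ℝ) → ℝ) (S : Finset (Fin m)) : ℝ :=
  ∑ x : Fin m → Bool,
    (∏ i, (1 + toPM (x i) * μ i) / 2) * f (fun i => toPM (x i)) *
      ∏ i ∈ S, (toPM (x i) - μ i) / Real.sqrt (1 - (μ i) ^ 2)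

open Finset

theorem sum_comp_pi_mul_prod {ι α β R : Type*} [Fintype ι] [DecidableEq ι]
    [Fintype α] [Fintype β] [DecidableEq β] [CommSemiring R]
    (φ : α → β) (F : (ι → β) → R) (g : ι → α → R) :
    ∑ a : ι → α, F (fun i => φ (a i)) * ∏ i, g i (a i) =
      ∑ b : ι → β, F b * ∏ i, ∑ x with φ x = b i, g i x := by
  rw [← Finset.sum_fiberwise univ fun (a : ι → α) i => φ (a i)]
  refine sum_congr rfl fun b _ => ?_
  have hfiber : ({a | ∀ i, φ (a i) = b i} : Finset (ι → α)) =
      Fintype.piFinset fun i => {x | φ x = b i} := by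
    ext a; simp
  rw [prod_univ_sum, ← hfiber, mul_sum]
  refine sum_congr (by simp [funext_iff]) fun a ha => ?_
  rw [show (fun i => φ (a i)) = b from funext (mem_filter.1 ha).2]

lemma toPM_mul_self (b : Bool) : toPM b * toPM b = 1 := by cases b <;> simp [toPM]

lemma applyR_toPM {m : ℕ} (r : Fin m → Option Bool) (y : Fin m → Bool) :
    applyR r (fun i => toPM (y i)) = fun i => toPM ((r i).getD (y i)) := by
  funext i
  cases h : r i <;> simp [applyR, h]

/-- `none`: the coordinate is left free; `some b`: it is fixed to `toPM b`. -/
noncomputable def restrictionWeight (μ : ℝ) : Option Bool → ℝ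
  | none => 1 / 2
  | some b => (1 + 2 * toPM b * μ) / 4

lemma sum_restrictionWeight (μ : ℝ) : ∑ o, restrictionWeight μ o = 1 := by
  simp only [Fintype.sum_option, Fintype.sum_bool, restrictionWeight, toPM, if_true,
    Bool.false_eq_true, if_false]
  ring

lemma restrictionWeight_nonneg {μ : ℝ} (hμ : μ ∈ Set.Icc (-(1:ℝ)/2) (1/2)) (o : Option Bool) :
    0 ≤ restrictionWeight μ o := by
  obtain ⟨h₁, h₂⟩ := hμ
  rcases o with _ | _ | _ <;> simp only [restrictionWeight, toPM, if_true, Bool.false_eq_true,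
    if_false] <;> linarith

noncomputable def restrictionProb {ι : Type*} [Fintype ι] (μ : ι → ℝ) (r : ι → Option Bool) : ℝ :=
  ∏ i, restrictionWeight (μ i) (r i)

lemma sum_restrictionProb {ι : Type*} [Fintype ι] [DecidableEq ι] (μ : ι → ℝ) :
    ∑ r, restrictionProb μ r = 1 := by
  simp only [restrictionProb, ← Fintype.prod_sum, sum_restrictionWeight, prod_const_one]

lemma restrictionProb_nonneg {ι : Type*} [Fintype ι] {μ : ι → ℝ}
    (hμ : ∀ i, μ i ∈ Set.Icc (-(1:ℝ)/2) (1/2)) (r : ι → Option Bool) :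
    0 ≤ restrictionProb μ r :=
  prod_nonneg fun i _ => restrictionWeight_nonneg (hμ i) (r i)

lemma sum_restrictionWeight_getD_eq (μ : ℝ) (p : Prop) [Decidable p] (b : Bool) :
    ∑ x : Option Bool × Bool with x.1.getD x.2 = b,
        restrictionWeight μ x.1 / 2 * (if p then toPM x.2 else 1) =
      if p then toPM b / 4 else (1 + toPM b * μ) / 2 := by
  by_cases hp : p <;> cases b <;>
    simp [hp, sum_filter, Fintype.sum_prod_type, Fintype.sum_option, restrictionWeight, toPM] <;>
    ring

lemma sum_restrictionProb_mul_hatU {m : ℕ} (μ : Fin m → ℝ) (f : (Fin m → ℝ) → ℝ)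
    (S : Finset (Fin m)) :
    ∑ r : Fin m → Option Bool,
        restrictionProb μ r * hatU (fun x => f (applyR r x)) S =
      ∑ z : Fin m → Bool, f (fun i => toPM (z i)) *
        ∏ i, (if i ∈ S then toPM (z i) / 4 else (1 + toPM (z i) * μ i) / 2) := by
  calc _ = ∑ a : Fin m → Option Bool × Bool, f (fun i => toPM ((a i).1.getD (a i).2)) *
          ∏ i, (restrictionWeight (μ i) (a i).1 / 2 * (if i ∈ S then toPM (a i).2 else 1)) := by
        rw [← (Equiv.arrowProdEquivProdArrow _ _ _).symm.sum_comp, Fintype.sum_prod_type]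
        refine sum_congr rfl fun r _ => ?_
        simp only [Equiv.arrowProdEquivProdArrow, Equiv.coe_fn_symm_mk, restrictionProb, hatU,
          mul_sum, applyR_toPM]
        refine sum_congr rfl fun y _ => ?_
        rw [prod_mul_distrib, prod_div_distrib, Fintype.prod_ite_mem, prod_const, card_univ,
          Fintype.card_fin]
        ring
    _ = _ := by
        refine (sum_comp_pi_mul_prod (fun x : Option Bool × Bool => x.1.getD x.2)
          (fun z => f fun i => toPM (z i))
          fun i x => restrictionWeight (μ i) x.1 / 2 * (if i ∈ S then toPM x.2 else 1)).trans ?_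
        simp only [sum_restrictionWeight_getD_eq]

lemma density_mul_biasedChar (μ : ℝ) (b : Bool) :
    (1 + toPM b * μ) / 2 * ((toPM b - μ) / Real.sqrt (1 - μ ^ 2)) =
      2 * Real.sqrt (1 - μ ^ 2) * (toPM b / 4) := by
  have key : (1 + toPM b * μ) * (toPM b - μ) = toPM b * (1 - μ ^ 2) := by
    linear_combination μ * toPM_mul_self b
  rcases le_or_gt (1 - μ ^ 2) 0 with h | h
  · simp [Real.sqrt_eq_zero'.2 h]
  · have hσ : Real.sqrt (1 - μ ^ 2) ≠ 0 := (Real.sqrt_pos.2 h).ne'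
    field_simp
    linear_combination 4 * key - 4 * toPM b * Real.sq_sqrt h.le

lemma hatMu_eq_prod_mul_sum_restrictionProb_mul_hatU {m : ℕ} (μ : Fin m → ℝ)
    (f : (Fin m → ℝ) → ℝ) (S : Finset (Fin m)) :
    hatMu μ f S = (∏ i ∈ S, 2 * Real.sqrt (1 - μ i ^ 2)) *
      ∑ r : Fin m → Option Bool,
        restrictionProb μ r * hatU (fun x => f (applyR r x)) S := by
  rw [sum_restrictionProb_mul_hatU, hatMu, mul_sum]
  refine sum_congr rfl fun z _ => ?_
  rw [← Fintype.prod_ite_mem S, ← Fintype.prod_ite_mem S]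
  calc _ = f (fun i => toPM (z i)) * ∏ i, ((1 + toPM (z i) * μ i) / 2 *
          if i ∈ S then (toPM (z i) - μ i) / Real.sqrt (1 - μ i ^ 2) else 1) := by
        rw [prod_mul_distrib]; ring
    _ = f (fun i => toPM (z i)) * ∏ i, ((if i ∈ S then 2 * Real.sqrt (1 - μ i ^ 2) else 1) *
          if i ∈ S then toPM (z i) / 4 else (1 + toPM (z i) * μ i) / 2) := by
        congr 1
        refine prod_congr rfl fun i _ => ?_
        split_ifs
        · exact density_mul_biasedChar (μ i) (z i)
        · ring
    _ = _ := by rw [prod_mul_distrib]; ring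

lemma abs_hatMu_le {m : ℕ} {μ : Fin m → ℝ} (hμ : ∀ i, μ i ∈ Set.Icc (-(1:ℝ)/2) (1/2))
    (f : (Fin m → ℝ) → ℝ) (S : Finset (Fin m)) :
    |hatMu μ f S| ≤
      2 ^ S.card * ∑ r, restrictionProb μ r * |hatU (fun x => f (applyR r x)) S| := by
  rw [hatMu_eq_prod_mul_sum_restrictionProb_mul_hatU, abs_mul]
  have hσ : |∏ i ∈ S, 2 * Real.sqrt (1 - μ i ^ 2)| ≤ 2 ^ S.card := by
    rw [abs_of_nonneg (by positivity), ← prod_const]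
    refine prod_le_prod (fun i _ => by positivity) fun i _ => ?_
    have : Real.sqrt (1 - μ i ^ 2) ≤ 1 := Real.sqrt_le_one.2 (by nlinarith)
    linarith
  have havg : |∑ r, restrictionProb μ r * hatU (fun x => f (applyR r x)) S| ≤
      ∑ r, restrictionProb μ r * |hatU (fun x => f (applyR r x)) S| := by
    refine (abs_sum_le_sum_abs _ _).trans_eq (sum_congr rfl fun r _ => ?_)
    rw [abs_mul, abs_of_nonneg (restrictionProb_nonneg hμ r)]
  exact mul_le_mul hσ havg (abs_nonneg _) (by positivity)

theorem stmt19_general {m : ℕ} (ℓ : ℕ) (f : (Fin m → ℝ) → ℝ)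
    (μ : Fin m → ℝ) (hμ : ∀ i, μ i ∈ Set.Icc (-(1:ℝ)/2) (1/2)) (w : ℝ)
    (hw : ∀ r : Fin m → Option Bool,
      ∑ S ∈ Finset.univ.filter (fun S : Finset (Fin m) => S.card = ℓ),
        |hatU (fun x => f (applyR r x)) S| ≤ w) :
    ∑ S ∈ Finset.univ.filter (fun S : Finset (Fin m) => S.card = ℓ),
      |hatMu μ f S| ≤ 4 ^ ℓ * w := by
  have hw₀ : 0 ≤ w := (sum_nonneg fun _ _ => abs_nonneg _).trans (hw fun _ => none)
  calc _ ≤ ∑ S ∈ univ.filter (fun S : Finset (Fin m) => S.card = ℓ),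
          2 ^ ℓ * ∑ r, restrictionProb μ r * |hatU (fun x => f (applyR r x)) S| :=
        sum_le_sum fun S hS => (mem_filter.1 hS).2 ▸ abs_hatMu_le hμ f S
    _ = 2 ^ ℓ * ∑ r, restrictionProb μ r * ∑ S ∈ univ.filter (fun S : Finset (Fin m) => S.card = ℓ),
          |hatU (fun x => f (applyR r x)) S| := by
        simp only [mul_sum]
        rw [sum_comm]
    _ ≤ 2 ^ ℓ * ∑ r, restrictionProb μ r * w := by
        gcongr with r
        · exact restrictionProb_nonneg hμ r
        · exact hw r
    _ = 2 ^ ℓ * w := by rw [← sum_mul, sum_restrictionProb, one_mul]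
    _ ≤ 4 ^ ℓ * w := by gcongr; norm_num

theorem stmt19 {m : ℕ} (ℓ : ℕ) (hℓ : 1 ≤ ℓ ∧ ℓ ≤ m) (f : (Fin m → ℝ) → ℝ)
    (μ : Fin m → ℝ) (hμ : ∀ i, μ i ∈ Set.Icc (-(1:ℝ)/2) (1/2)) (w : ℝ)
    (hw : ∀ r : Fin m → Option Bool,
      ∑ S ∈ Finset.univ.filter (fun S : Finset (Fin m) => S.card = ℓ),
        |hatU (fun x => f (applyR r x)) S| ≤ w) :
    ∑ S ∈ Finset.univ.filter (fun S : Finset (Fin m) => S.card = ℓ),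
      |hatMu μ f S| ≤ 4 ^ ℓ * w :=
  stmt19_general ℓ f μ hμ w hw
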